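/- Let G_B be the presented group on generators t, π, β, α with the relations listed in the context (the presentation of the universal mapping class group of genus zero from Theorem 3.1), and let G_V be the presented group on generators π, β, α with the eleven relations listed in the context (Corollary 3.2). Then the quotient of G_B by the normal closure of the image of the generator t is isomorphic to G_V, via an isomorphism sending the classes of π, β, α in the quotient to the generators π, β, α of G_V. -/

import Mathlib

/-!
Killing `t` turns `t₁, …, t₄` into `1`, and modulo `π² = 1`, `β³ = 1`, `α⁴ = 1` and
`π^β π = β` (all of which hold on both sides) every relator of `G_B` then either becomes trivial
or normalizes to a relator of `G_V`: `4(e)` becomes `(9)` since `(π^β)⁻¹ = π^β`, and `6(b)`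
becomes `(11)` since `π π^β = β²`. Hence the assignments `t ↦ 1, π ↦ π, β ↦ β, α ↦ α` and
`π ↦ π, β ↦ β, α ↦ α` define mutually inverse homomorphisms `G_B ⧸ ⟪t⟫ ⇄ G_V`.
-/

namespace Stmt0

open scoped commutatorElement

/-! ### The presentation `G_B` (generators `0 = t`, `1 = π`, `2 = β`, `3 = α`) -/

/-- The generator `t` of `G_B`. -/
def t : FreeGroup (Fin 4) := FreeGroup.of 0

/-- The generator `π` of `G_B`. -/
def p : FreeGroup (Fin 4) := FreeGroup.of 1

/-- The generator `β` of `G_B`. -/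
def b : FreeGroup (Fin 4) := FreeGroup.of 2

/-- The generator `α` of `G_B`. -/
def a : FreeGroup (Fin 4) := FreeGroup.of 3

/-- `t₁ := βtβ⁻¹`. -/
def t1 : FreeGroup (Fin 4) := b * t * b⁻¹

/-- `t₂ := β⁻¹tβ`. -/
def t2 : FreeGroup (Fin 4) := b⁻¹ * t * b

/-- `t₃ := α²t₁α²`. -/
def t3 : FreeGroup (Fin 4) := a ^ 2 * t1 * a ^ 2

/-- `t₄ := α²t₂α²`. -/
def t4 : FreeGroup (Fin 4) := a ^ 2 * t2 * a ^ 2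

/-- `π^β := β⁻¹πβ`. -/
def pb : FreeGroup (Fin 4) := b⁻¹ * p * b

/-- `π^{α²} := α²πα²`. -/
def pa : FreeGroup (Fin 4) := a ^ 2 * p * a ^ 2

/-- The relators of `G_B` (Theorem 3.1). -/
def relsB : Set (FreeGroup (Fin 4)) :=
  { -- 1(a)
    ⁅t, t1⁆, ⁅t, t2⁆, ⁅t, p⁆,
    -- 1(b)
    t1 * p * (p * t2)⁻¹, t2 * p * (p * t1)⁻¹,
    -- 1(c)
    p ^ 2 * (t * t1⁻¹ * t2⁻¹)⁻¹,
    -- 1(d)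
    b ^ 3,
    -- 1(e)
    b * (t * pb * p)⁻¹,
    -- 2(a)
    (b * a) ^ 5,
    -- 2(b)
    (a * p) ^ 3 * t2,
    -- 3(a)
    a ^ 4,
    -- 4(a)
    ⁅p, a ^ 2 * p * a ^ 2⁆,
    -- 4(b)
    ⁅t3, p⁆, ⁅t4, p⁆,
    -- 4(c)
    a * t1 * a⁻¹ * t2⁻¹,
    -- 4(d)
    ⁅t1, t3⁆, ⁅t3, pb * t3 * pb⁻¹⁆, ⁅t3, pb * pa * pb⁻¹⁆,
    -- 4(e)
    ⁅pa, pb * pa * pb⁻¹⁆,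
    -- 4(f)
    ⁅b * a * pb, pa⁆,
    -- 4(g)
    (b * a) * t2 * (b * a)⁻¹ * (pb * t3 * pb⁻¹)⁻¹,
    (b * a) * t3 * (b * a)⁻¹ * (pb * t4 * pb⁻¹)⁻¹,
    (b * a) * t4 * (b * a)⁻¹ * t2⁻¹,
    -- 5(a)
    t * (a ^ 2 * t * a ^ 2)⁻¹,
    -- 6(a)
    (a ^ 2 * pb * a ^ 3 * b ^ 2) ^ 2 * ((pb * a ^ 3 * b ^ 2 * a ^ 2) ^ 2)⁻¹,
    -- 6(b)
    (a ^ 2 * b * a ^ 2 * p * pb * a ^ 3 * b ^ 2 * a ^ 2 * b ^ 2 * a ^ 2) *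
      ((a ^ 3 * b ^ 2 * a ^ 2 * b * a ^ 2 * pb) ^ 2)⁻¹ }

/-- `G_B`. -/
abbrev GB := PresentedGroup relsB

/-! ### The presentation `G_V` (generators `0 = π`, `1 = β`, `2 = α`) -/

/-- The generator `π` of `G_V`. -/
def pv : FreeGroup (Fin 3) := FreeGroup.of 0

/-- The generator `β` of `G_V`. -/
def bv : FreeGroup (Fin 3) := FreeGroup.of 1

/-- The generator `α` of `G_V`. -/
def av : FreeGroup (Fin 3) := FreeGroup.of 2

/-- `π^β := β⁻¹πβ`. -/
def pbv : FreeGroup (Fin 3) := bv⁻¹ * pv * bv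

/-- `π^{α²} := α²πα²`. -/
def pav : FreeGroup (Fin 3) := av ^ 2 * pv * av ^ 2

/-- The eleven relators of `G_V` (Corollary 3.2). -/
def relsV : Set (FreeGroup (Fin 3)) :=
  { pv ^ 2,
    bv ^ 3,
    av ^ 4,
    pbv * pv * bv⁻¹,
    (bv * av) ^ 5,
    (av * pv) ^ 3,
    ⁅pv, av ^ 2 * pv * av ^ 2⁆,
    ⁅bv * av * pbv, pav⁆,
    ⁅pav, pbv * pav * pbv⁆,
    (av ^ 2 * pbv * av ^ 3 * bv ^ 2) ^ 2 * ((pbv * av ^ 3 * bv ^ 2 * av ^ 2) ^ 2)⁻¹,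
    (av ^ 2 * bv * av ^ 2 * bv ^ 2 * av ^ 3 * bv ^ 2 * av ^ 2 * bv ^ 2 * av ^ 2) *
      ((av ^ 3 * bv ^ 2 * av ^ 2 * bv * av ^ 2 * pbv) ^ 2)⁻¹ }

/-- `G_V`. -/
abbrev GV := PresentedGroup relsV

theorem _root_.PresentedGroup.lift_comp_of_eq_one {ι H : Type*} [Group H]
    {rels : Set (FreeGroup ι)} (g : PresentedGroup rels →* H) {r : FreeGroup ι} (hr : r ∈ rels) :
    FreeGroup.lift (g ∘ PresentedGroup.of) r = 1 := by
  have : FreeGroup.lift (g ∘ PresentedGroup.of) = g.comp (PresentedGroup.mk rels) :=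
    FreeGroup.ext_hom _ _ fun _ => FreeGroup.lift_apply_of
  rw [this, MonoidHom.comp_apply, PresentedGroup.one_of_mem hr, map_one]

section

variable {G : Type*} [Group G] {π β α : G}

theorem mul_conj_eq_sq_of_conj_mul_eq (hπ : π ^ 2 = 1) (hβ : β ^ 3 = 1)
    (hβπ : β⁻¹ * π * β * π = β) : π * (β⁻¹ * π * β) = β ^ 2 :=
  calc π * (β⁻¹ * π * β) = (β⁻¹ * π * β * π)⁻¹ := by
        simp only [mul_inv_rev, inv_inv, inv_eq_of_mul_eq_one_right ((sq π).symm.trans hπ),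
          mul_assoc]
    _ = β⁻¹ := by rw [hβπ]
    _ = β ^ 2 := inv_eq_of_mul_eq_one_right (by rw [← pow_succ']; exact hβ)

theorem basic_relations_of_lift_relsV (h : ∀ r ∈ relsV, FreeGroup.lift ![π, β, α] r = 1) :
    π ^ 2 = 1 ∧ β ^ 3 = 1 ∧ α ^ 4 = 1 ∧ β⁻¹ * π * β * π = β := by
  simp only [relsV, Set.mem_insert_iff, Set.mem_singleton_iff, forall_eq_or_imp, forall_eq,
    pv, bv, av, pbv, map_mul, map_inv, map_pow, FreeGroup.lift_apply_of, Matrix.cons_val_zero,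
    Matrix.cons_val_one, Matrix.cons_val_two, Matrix.head_cons, Matrix.tail_cons] at h
  obtain ⟨hπ, hβ, hα, hβπ, -⟩ := h
  exact ⟨hπ, hβ, hα, mul_inv_eq_one.mp hβπ⟩

theorem basic_relations_of_lift_relsB (h : ∀ r ∈ relsB, FreeGroup.lift ![1, π, β, α] r = 1) :
    π ^ 2 = 1 ∧ β ^ 3 = 1 ∧ α ^ 4 = 1 ∧ β⁻¹ * π * β * π = β := by
  simp only [relsB, Set.mem_insert_iff, Set.mem_singleton_iff, forall_eq_or_imp, forall_eq,
    t, p, b, a, t1, t2, pb, map_mul, map_inv, map_pow, FreeGroup.lift_apply_of,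
    Matrix.cons_val_zero, Matrix.cons_val_one, Matrix.cons_val_two, Matrix.cons_val_three,
    Matrix.head_cons, Matrix.tail_cons, mul_one, one_mul, inv_one, mul_inv_cancel, inv_mul_cancel]
    at h
  obtain ⟨-, -, -, -, -, hπ, hβ, hβπ, -, -, hα, -⟩ := h
  exact ⟨hπ, hβ, hα, (mul_inv_eq_one.mp hβπ).symm⟩

theorem lift_relsB_eq_one_iff_of_basic (hπ : π ^ 2 = 1) (hβ : β ^ 3 = 1) (hα : α ^ 4 = 1)
    (hβπ : β⁻¹ * π * β * π = β) :
    (∀ r ∈ relsB, FreeGroup.lift ![1, π, β, α] r = 1) ↔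
      ∀ r ∈ relsV, FreeGroup.lift ![π, β, α] r = 1 := by
  have hπ2 : π * π = 1 := (sq π).symm.trans hπ
  have hππ (x : G) : π * (π * x) = x := by rw [← mul_assoc, hπ2, one_mul]
  have hα2 : α ^ 2 * α ^ 2 = 1 := by rw [← pow_add]; exact hα
  have hαα (x : G) : α ^ 2 * (α ^ 2 * x) = x := by rw [← mul_assoc, hα2, one_mul]
  have hconj := mul_conj_eq_sq_of_conj_mul_eq hπ hβ hβπ
  have hconj_mul (x : G) : π * (β⁻¹ * (π * (β * x))) = β ^ 2 * x := by
    simp only [← hconj, mul_assoc]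
  have h4 : β⁻¹ * (π * (β * (π * β⁻¹))) = 1 := by
    simp only [← mul_assoc, hβπ, mul_inv_cancel]
  have h1e : β * (π * (β⁻¹ * (π * β))) = 1 := by
    rw [← mul_assoc β⁻¹, hconj, ← pow_succ', hβ]
  simp only [relsB, relsV, Set.mem_insert_iff, Set.mem_singleton_iff, forall_eq_or_imp, forall_eq,
    t, p, b, a, t1, t2, t3, t4, pb, pa, pv, bv, av, pbv, pav, map_mul, map_inv, map_pow,
    FreeGroup.lift_apply_of, commutatorElement_def, Matrix.cons_val_zero, Matrix.cons_val_one,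
    Matrix.cons_val_two, Matrix.cons_val_three, Matrix.head_cons, Matrix.tail_cons,
    mul_one, one_mul, inv_one, mul_inv_cancel, inv_mul_cancel, mul_assoc, mul_inv_rev, inv_inv,
    mul_inv_cancel_left, inv_mul_cancel_left, inv_eq_of_mul_eq_one_right hπ2,
    inv_eq_of_mul_eq_one_right hα2, hπ, hβ, hα, hπ2, hα2, hππ, hαα, hconj_mul, h4, h1e, true_and]
  tauto

theorem lift_relsB_eq_one_iff :
    (∀ r ∈ relsB, FreeGroup.lift ![1, π, β, α] r = 1) ↔
      ∀ r ∈ relsV, FreeGroup.lift ![π, β, α] r = 1 := by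
  refine ⟨fun h => ?_, fun h => ?_⟩
  · obtain ⟨hπ, hβ, hα, hβπ⟩ := basic_relations_of_lift_relsB h
    exact (lift_relsB_eq_one_iff_of_basic hπ hβ hα hβπ).1 h
  · obtain ⟨hπ, hβ, hα, hβπ⟩ := basic_relations_of_lift_relsV h
    exact (lift_relsB_eq_one_iff_of_basic hπ hβ hα hβπ).2 h

end

local notation "N" => Subgroup.normalClosure {(PresentedGroup.of 0 : GB)}

theorem lift_of_relsV_eq_one {r : FreeGroup (Fin 3)} (hr : r ∈ relsV) :
    FreeGroup.lift ![(.of 0 : GV), .of 1, .of 2] r = 1 := by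
  have : ![(.of 0 : GV), .of 1, .of 2] = MonoidHom.id GV ∘ PresentedGroup.of := by
    funext i; fin_cases i <;> rfl
  rw [this]
  exact PresentedGroup.lift_comp_of_eq_one _ hr

theorem mk_of_zero_eq_one : QuotientGroup.mk' N (PresentedGroup.of 0) = 1 :=
  (QuotientGroup.eq_one_iff _).mpr (Subgroup.subset_normalClosure rfl)

theorem lift_mk_of_relsB_eq_one {r : FreeGroup (Fin 4)} (hr : r ∈ relsB) :
    FreeGroup.lift ![1, QuotientGroup.mk' N (.of 1), QuotientGroup.mk' N (.of 2),
      QuotientGroup.mk' N (.of 3)] r = 1 := by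
  have : ![1, QuotientGroup.mk' N (.of 1), QuotientGroup.mk' N (.of 2),
      QuotientGroup.mk' N (.of 3)] = QuotientGroup.mk' N ∘ PresentedGroup.of := by
    funext i; fin_cases i
    exacts [mk_of_zero_eq_one.symm, rfl, rfl, rfl]
  rw [this]
  exact PresentedGroup.lift_comp_of_eq_one _ hr

def toGV : GB →* GV :=
  PresentedGroup.toGroup (lift_relsB_eq_one_iff.2 fun _ => lift_of_relsV_eq_one)

def ofGV : GV →* GB ⧸ N :=
  PresentedGroup.toGroup (lift_relsB_eq_one_iff.1 fun _ => lift_mk_of_relsB_eq_one)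

theorem normalClosure_le_ker_toGV : N ≤ toGV.ker :=
  Subgroup.normalClosure_le_normal (Set.singleton_subset_iff.2 (PresentedGroup.toGroup.of _))

def quotientEquivGV : GB ⧸ N ≃* GV :=
  (QuotientGroup.lift N toGV normalClosure_le_ker_toGV).toMulEquiv ofGV
    (QuotientGroup.monoidHom_ext _ <| PresentedGroup.ext fun i => by
      fin_cases i
      exacts [mk_of_zero_eq_one.symm, rfl, rfl, rfl])
    (PresentedGroup.ext fun i => by fin_cases i <;> rfl)

theorem quotient_GB_by_t_iso_GV :
    ∃ e : (GB ⧸ Subgroup.normalClosure {(PresentedGroup.of 0 : GB)}) ≃* GV,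
      e ((QuotientGroup.mk' _) (PresentedGroup.of 1)) = (PresentedGroup.of 0 : GV) ∧
      e ((QuotientGroup.mk' _) (PresentedGroup.of 2)) = (PresentedGroup.of 1 : GV) ∧
      e ((QuotientGroup.mk' _) (PresentedGroup.of 3)) = (PresentedGroup.of 2 : GV) :=
  ⟨quotientEquivGV, rfl, rfl, rfl⟩

end Stmt0
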